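/- arXiv:2511.12434 — 2 statements merged into one kernel-verified Lean document; each statement's English description precedes it below -/
import Mathlib

section
/- Softmax is 2-Lipschitz in ℓ∞→ℓ₁ norms: for f, f' ∈ ℝⁿ, the softmax outputs satisfy Σⱼ |αⱼ(f) − αⱼ(f')| ≤ 2 · maxₖ |fₖ − f'ₖ|. -/
/-- The softmax function. -/
noncomputable def softmax {n : ℕ} (f : Fin n → ℝ) (j : Fin n) : ℝ :=
  Real.exp (f j) / ∑ k, Real.exp (f k)

lemma sum_exp_pos' {n : ℕ} (hn : 0 < n) (f : Fin n → ℝ) : 0 < ∑ k, Real.exp (f k) :=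
  Finset.sum_pos (fun k _ => Real.exp_pos _)
    (Finset.univ_nonempty_iff.mpr (Fin.pos_iff_nonempty.mp hn))

lemma sum_softmax' {n : ℕ} (hn : 0 < n) (f : Fin n → ℝ) : ∑ j, softmax f j = 1 := by
  unfold softmax
  rw [← Finset.sum_div]
  exact div_self (sum_exp_pos' hn f).ne'

lemma softmax_key {n : ℕ} (hn : 0 < n) (f f' : Fin n → ℝ) {M : ℝ}
    (hM : ∀ k, |f k - f' k| ≤ M)
    (hS : ∑ k, Real.exp (f' k) ≤ ∑ k, Real.exp (f k)) :
    ∑ j, max (softmax f j - softmax f' j) 0 ≤ M := by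
  have hSpos := sum_exp_pos' hn f
  have hS'pos := sum_exp_pos' hn f'
  have hM0 : 0 ≤ M := le_trans (abs_nonneg _) (hM ⟨0, hn⟩)
  have h1 : ∀ j, max (softmax f j - softmax f' j) 0
      ≤ Real.exp (f j) * M / (∑ k, Real.exp (f k)) := by
    intro j
    have hb : Real.exp (f j) - Real.exp (f' j) ≤ Real.exp (f j) * M := by
      have h2 : f j - M ≤ f' j := by
        have := hM j; rw [abs_le] at this; linarith [this.1]
      have h3 : Real.exp (f j - M) ≤ Real.exp (f' j) := Real.exp_le_exp.mpr h2
      have h4 : Real.exp (f j - M) = Real.exp (f j) * Real.exp (-M) := by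
        rw [← Real.exp_add]; ring_nf
      nlinarith [Real.add_one_le_exp (-M), Real.exp_pos (f j)]
    apply max_le _ (div_nonneg (mul_nonneg (Real.exp_pos _).le hM0) hSpos.le)
    have hbb : softmax f' j ≥ Real.exp (f' j) / (∑ k, Real.exp (f k)) := by
      unfold softmax
      exact div_le_div_of_nonneg_left (Real.exp_pos _).le hS'pos hS
    have : softmax f j - softmax f' j
        ≤ (Real.exp (f j) - Real.exp (f' j)) / (∑ k, Real.exp (f k)) := by
      unfold softmax at *
      rw [sub_div]
      linarith
    refine this.trans ?_
    exact div_le_div_of_nonneg_right hb hSpos.le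
  calc ∑ j, max (softmax f j - softmax f' j) 0
      ≤ ∑ j, Real.exp (f j) * M / (∑ k, Real.exp (f k)) :=
        Finset.sum_le_sum fun j _ => h1 j
    _ = M := by
        rw [← Finset.sum_div, ← Finset.sum_mul]
        field_simp

/-- Softmax is 2-Lipschitz from the ℓ∞ norm to the ℓ₁ norm. -/
theorem softmax_two_lipschitz {n : ℕ} (hn : 0 < n) (f f' : Fin n → ℝ) :
    ∑ j, |softmax f j - softmax f' j| ≤
      2 * Finset.univ.sup' (Finset.univ_nonempty_iff.mpr (Fin.pos_iff_nonempty.mp hn))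
        (fun k => |f k - f' k|) := by
  set M := Finset.univ.sup' (Finset.univ_nonempty_iff.mpr (Fin.pos_iff_nonempty.mp hn))
    (fun k => |f k - f' k|) with hMdef
  have hM : ∀ k, |f k - f' k| ≤ M := fun k =>
    Finset.le_sup' (fun k => |f k - f' k|) (Finset.mem_univ k)
  have hM' : ∀ k, |f' k - f k| ≤ M := fun k => by rw [abs_sub_comm]; exact hM k
  have hsum : (∑ j, softmax f j) - ∑ j, softmax f' j = 0 := by
    rw [sum_softmax' hn f, sum_softmax' hn f']; ring
  rcases le_total (∑ k, Real.exp (f' k)) (∑ k, Real.exp (f k)) with hS | hS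
  · have h := softmax_key hn f f' hM hS
    have : ∑ j, |softmax f j - softmax f' j|
        = 2 * ∑ j, max (softmax f j - softmax f' j) 0 := by
      rw [Finset.mul_sum]
      rw [show (∑ j, |softmax f j - softmax f' j|)
        = (∑ j, (2 * max (softmax f j - softmax f' j) 0 - (softmax f j - softmax f' j))) from ?_]
      · rw [Finset.sum_sub_distrib, Finset.sum_sub_distrib, hsum, sub_zero]
      · apply Finset.sum_congr rfl; intro j _
        rcases le_total (softmax f j - softmax f' j) 0 with h | h
        · rw [max_eq_right h, abs_of_nonpos h]; ring
        · rw [max_eq_left h, abs_of_nonneg h]; ring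
    rw [this]; linarith
  · have h := softmax_key hn f' f hM' hS
    have : ∑ j, |softmax f j - softmax f' j|
        = 2 * ∑ j, max (softmax f' j - softmax f j) 0 := by
      rw [Finset.mul_sum]
      rw [show (∑ j, |softmax f j - softmax f' j|)
        = (∑ j, (2 * max (softmax f' j - softmax f j) 0 + (softmax f j - softmax f' j))) from ?_]
      · rw [Finset.sum_add_distrib, Finset.sum_sub_distrib, hsum, add_zero]
      · apply Finset.sum_congr rfl; intro j _
        rcases le_total (softmax f j - softmax f' j) 0 with h | h
        · rw [max_eq_left (by linarith), abs_of_nonpos h]; ring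
        · rw [max_eq_right (by linarith), abs_of_nonneg h]; ring
    rw [this]; linarith
end

section
/- SGD convergence rate: under the one-step descent assumptions (F is L-smooth, unbiased stochastic gradients with variance ≤ σ², step size η < 2/L, F bounded below by F*), after T steps of θ_{t+1} = θ_t − η g_t: (1/T)Σ_{t=0}^{T−1} E[‖∇F(θ_t)‖²] ≤ 2(F(θ₀) − F*)/(ηT(2 − ηL)) + ηLσ²/(2 − ηL). -/
/-!
Smoothness gives the descent inequality
`F (θ - η g) ≤ F θ - η ⟪∇F θ, g⟫ + η² L / 2 ‖g‖²`. Taking expectations, unbiasedness turns the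
cross term into `E ‖∇F θ‖²` (pull-out property of the conditional expectation), and the same
orthogonality splits `E ‖g‖² = E ‖∇F θ‖² + E ‖g - ∇F θ‖² ≤ E ‖∇F θ‖² + σ²`. Each step therefore
decreases `E F(θ_t)` by at least `η (2 - η L) / 2 · E ‖∇F θ_t‖² - η² L σ² / 2`; summing over
`t < T` telescopes, and `E F(θ_T) ≥ F*` bounds the total decrease by `F θ₀ - F*`.
-/

open MeasureTheory RealInnerProductSpace

section Descent

variable {E : Type*} [NormedAddCommGroup E] [InnerProductSpace ℝ E] [CompleteSpace E]
  {f : E → ℝ} {L : ℝ}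

theorem le_add_inner_gradient_add_sq_of_lipschitz_gradient (hf : Differentiable ℝ f)
    (hlip : ∀ x y, ‖gradient f x - gradient f y‖ ≤ L * ‖x - y‖) (x y : E) :
    f y ≤ f x + ⟪gradient f x, y - x⟫ + L / 2 * ‖y - x‖ ^ 2 := by
  set v := y - x
  -- The claim is `ψ 1 ≤ ψ 0`; the Lipschitz bound makes `ψ' ≤ 0` on `[0, ∞)`.
  set ψ : ℝ → ℝ := fun s => f (x + s • v) - s * ⟪gradient f x, v⟫ - L / 2 * s ^ 2 * ‖v‖ ^ 2
  have hψ : ∀ s, HasDerivAt ψ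
      (⟪gradient f (x + s • v), v⟫ - ⟪gradient f x, v⟫ - L * s * ‖v‖ ^ 2) s := by
    intro s
    have hline : HasDerivAt (fun s : ℝ => x + s • v) v s := by
      simpa using ((hasDerivAt_id s).smul_const v).const_add x
    have hfline : HasDerivAt (fun s : ℝ => f (x + s • v)) ⟪gradient f (x + s • v), v⟫ s :=
      ((hf _).hasGradientAt.hasFDerivAt.comp_hasDerivAt s hline).congr_deriv (by simp)
    exact ((hfline.sub ((hasDerivAt_id s).mul_const _)).sub
      (((hasDerivAt_pow 2 s).const_mul (L / 2)).mul_const _)).congr_deriv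
      (by simp only [Nat.cast_ofNat, Nat.add_one_sub_one, pow_one]; ring)
  have hanti : AntitoneOn ψ (Set.Ici 0) := by
    refine antitoneOn_of_hasDerivWithinAt_nonpos (convex_Ici 0)
      (fun s _ => (hψ s).continuousAt.continuousWithinAt) (fun s _ => (hψ s).hasDerivWithinAt)
      fun s hs => ?_
    rw [interior_Ici, Set.mem_Ioi] at hs
    have hgrowth : ⟪gradient f (x + s • v) - gradient f x, v⟫ ≤ L * s * ‖v‖ ^ 2 :=
      calc ⟪gradient f (x + s • v) - gradient f x, v⟫
          ≤ ‖gradient f (x + s • v) - gradient f x‖ * ‖v‖ := real_inner_le_norm _ _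
        _ ≤ L * ‖s • v‖ * ‖v‖ := by
            gcongr
            simpa using hlip (x + s • v) x
        _ = L * s * ‖v‖ ^ 2 := by rw [norm_smul, Real.norm_of_nonneg hs.le]; ring
    rw [inner_sub_left] at hgrowth
    linarith
  have h10 : ψ 1 ≤ ψ 0 := hanti Set.self_mem_Ici (zero_le_one' ℝ) zero_le_one
  simp only [ψ, v, one_smul, zero_smul, add_zero, one_mul, one_pow, mul_one, add_sub_cancel] at h10
  linarith

theorem le_sub_inner_gradient_add_sq_of_lipschitz_gradient (hf : Differentiable ℝ f)
    (hlip : ∀ x y, ‖gradient f x - gradient f y‖ ≤ L * ‖x - y‖) (x v : E) (η : ℝ) :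
    f (x - η • v) ≤ f x - η * ⟪gradient f x, v⟫ + η ^ 2 * L / 2 * ‖v‖ ^ 2 := by
  have h := le_add_inner_gradient_add_sq_of_lipschitz_gradient hf hlip x (x - η • v)
  rw [sub_sub_cancel_left, inner_neg_right, inner_smul_right, norm_neg, norm_smul, mul_pow,
    Real.norm_eq_abs, sq_abs] at h
  linarith

end Descent

theorem MeasureTheory.MemLp.integrable_inner {E : Type*} [NormedAddCommGroup E]
    [InnerProductSpace ℝ E] {Ω : Type*} {mΩ : MeasurableSpace Ω} {μ : Measure Ω} {f g : Ω → E}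
    (hf : MemLp f 2 μ) (hg : MemLp g 2 μ) :
    Integrable (fun ω => ⟪f ω, g ω⟫) μ :=
  memLp_one_iff_integrable.1 ((innerSL ℝ).memLp_of_bilin 1 hf hg)

section ConditionalExpectation

variable {E : Type*} [NormedAddCommGroup E] [InnerProductSpace ℝ E] [CompleteSpace E]
  {Ω : Type*} {m mΩ : MeasurableSpace Ω} {μ : Measure Ω}

theorem integral_inner_eq_integral_norm_sq_of_condExp_ae_eq {u Y : Ω → E} (hm : m ≤ mΩ)
    [SigmaFinite (μ.trim hm)] (hu : StronglyMeasurable[m] u)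
    (huY : Integrable (fun ω => ⟪u ω, Y ω⟫) μ) (hY : Integrable Y μ)
    (hcond : μ[Y | m] =ᵐ[μ] u) :
    ∫ ω, ⟪u ω, Y ω⟫ ∂μ = ∫ ω, ‖u ω‖ ^ 2 ∂μ := by
  have hpull : μ[fun ω => ⟪u ω, Y ω⟫ | m] =ᵐ[μ] fun ω => ⟪u ω, (μ[Y | m]) ω⟫ :=
    condExp_bilin_of_stronglyMeasurable_left (innerSL ℝ) hu huY hY
  calc ∫ ω, ⟪u ω, Y ω⟫ ∂μ = ∫ ω, (μ[fun ω => ⟪u ω, Y ω⟫ | m]) ω ∂μ :=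
        (integral_condExp hm).symm
    _ = ∫ ω, ⟪u ω, u ω⟫ ∂μ :=
        integral_congr_ae (hpull.trans (hcond.mono fun ω hω => by simp only [hω]))
    _ = ∫ ω, ‖u ω‖ ^ 2 ∂μ := by simp only [real_inner_self_eq_norm_sq]

theorem integral_norm_sq_eq_add_of_condExp_ae_eq [IsFiniteMeasure μ] {u Y : Ω → E}
    (hm : m ≤ mΩ) (hu : StronglyMeasurable[m] u) (hu2 : MemLp u 2 μ) (hY2 : MemLp Y 2 μ)
    (hcond : μ[Y | m] =ᵐ[μ] u) :
    ∫ ω, ‖Y ω‖ ^ 2 ∂μ = ∫ ω, ‖u ω‖ ^ 2 ∂μ + ∫ ω, ‖Y ω - u ω‖ ^ 2 ∂μ := by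
  have huY := hu2.integrable_inner hY2
  have hcross := integral_inner_eq_integral_norm_sq_of_condExp_ae_eq hm hu huY
    (hY2.integrable one_le_two) hcond
  have hexpand : ∀ ω, ‖Y ω - u ω‖ ^ 2 = ‖Y ω‖ ^ 2 - 2 * ⟪u ω, Y ω⟫ + ‖u ω‖ ^ 2 := fun ω => by
    rw [norm_sub_sq_real, real_inner_comm]
  have hY2' : Integrable (fun ω => ‖Y ω‖ ^ 2) μ := hY2.integrable_norm_pow two_ne_zero
  have hu2' : Integrable (fun ω => ‖u ω‖ ^ 2) μ := hu2.integrable_norm_pow two_ne_zero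
  have hY2u : Integrable (fun ω => ‖Y ω‖ ^ 2 - 2 * ⟪u ω, Y ω⟫) μ := hY2'.sub (huY.const_mul 2)
  simp only [hexpand]
  rw [integral_add hY2u hu2', integral_sub hY2' (huY.const_mul 2), integral_const_mul, hcross]
  ring

theorem integral_le_of_ae_condExp_le [IsProbabilityMeasure μ] (hm : m ≤ mΩ) {f : Ω → ℝ} {c : ℝ}
    (hf : ∀ᵐ ω ∂μ, (μ[f | m]) ω ≤ c) :
    ∫ ω, f ω ∂μ ≤ c := by
  rw [← integral_condExp hm]
  simpa using integral_mono_ae integrable_condExp (integrable_const c) hf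

theorem integral_sgd_step_le [IsProbabilityMeasure μ] {f : E → ℝ} {L η σ : ℝ} (hL : 0 ≤ L)
    (hf : Differentiable ℝ f) (hlip : ∀ x y, ‖gradient f x - gradient f y‖ ≤ L * ‖x - y‖)
    {X Y : Ω → E} (hm : m ≤ mΩ) (hu : StronglyMeasurable[m] fun ω => gradient f (X ω))
    (hu2 : MemLp (fun ω => gradient f (X ω)) 2 μ)
    (hnoise2 : MemLp (fun ω => Y ω - gradient f (X ω)) 2 μ)
    (hfX : Integrable (fun ω => f (X ω)) μ) (hfX' : Integrable (fun ω => f (X ω - η • Y ω)) μ)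
    (hcond : μ[Y | m] =ᵐ[μ] fun ω => gradient f (X ω))
    (hvar : ∀ᵐ ω ∂μ, (μ[fun ω => ‖Y ω - gradient f (X ω)‖ ^ 2 | m]) ω ≤ σ ^ 2) :
    ∫ ω, f (X ω - η • Y ω) ∂μ ≤ ∫ ω, f (X ω) ∂μ
      - η * (2 - η * L) / 2 * ∫ ω, ‖gradient f (X ω)‖ ^ 2 ∂μ + η ^ 2 * L * σ ^ 2 / 2 := by
  have hY2 : MemLp Y 2 μ := by
    convert hu2.add hnoise2 using 1
    exact funext fun ω => (add_sub_cancel _ _).symm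
  have huY := hu2.integrable_inner hY2
  have hY2' : Integrable (fun ω => ‖Y ω‖ ^ 2) μ := hY2.integrable_norm_pow two_ne_zero
  have hfXuY : Integrable (fun ω => f (X ω) - η * ⟪gradient f (X ω), Y ω⟫) μ :=
    hfX.sub (huY.const_mul η)
  have hbound : Integrable (fun ω =>
      f (X ω) - η * ⟪gradient f (X ω), Y ω⟫ + η ^ 2 * L / 2 * ‖Y ω‖ ^ 2) μ :=
    hfXuY.add (hY2'.const_mul _)
  have hcross := integral_inner_eq_integral_norm_sq_of_condExp_ae_eq hm hu huY
    (hY2.integrable one_le_two) hcond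
  have hmoment := integral_norm_sq_eq_add_of_condExp_ae_eq hm hu hu2 hY2 hcond
  have hnoise : η ^ 2 * L / 2 * ∫ ω, ‖Y ω - gradient f (X ω)‖ ^ 2 ∂μ ≤ η ^ 2 * L / 2 * σ ^ 2 :=
    mul_le_mul_of_nonneg_left (integral_le_of_ae_condExp_le hm hvar) (by positivity)
  calc ∫ ω, f (X ω - η • Y ω) ∂μ
      ≤ ∫ ω, (f (X ω) - η * ⟪gradient f (X ω), Y ω⟫ + η ^ 2 * L / 2 * ‖Y ω‖ ^ 2) ∂μ :=
        integral_mono hfX' hbound fun ω =>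
          le_sub_inner_gradient_add_sq_of_lipschitz_gradient hf hlip (X ω) (Y ω) η
    _ = ∫ ω, f (X ω) ∂μ - η * ∫ ω, ‖gradient f (X ω)‖ ^ 2 ∂μ
          + η ^ 2 * L / 2 * ∫ ω, ‖Y ω‖ ^ 2 ∂μ := by
        rw [integral_add hfXuY (hY2'.const_mul _), integral_sub hfX (huY.const_mul η),
          integral_const_mul, integral_const_mul, hcross]
    _ ≤ _ := by rw [hmoment]; linarith

end ConditionalExpectation

theorem average_le_of_forall_le_sub_mul_add {a b : ℕ → ℝ} {c k lo : ℝ} {T : ℕ} (hc : 0 < c)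
    (hT : 0 < T) (hstep : ∀ t, a (t + 1) ≤ a t - c * b t + k) (hlo : lo ≤ a T) :
    1 / (T : ℝ) * ∑ t ∈ Finset.range T, b t ≤ (a 0 - lo) / (c * T) + k / c := by
  have htelescope : ∀ n, c * ∑ t ∈ Finset.range n, b t ≤ a 0 - a n + n * k := by
    intro n
    induction n with
    | zero => simp
    | succ n ih =>
      rw [Finset.sum_range_succ, mul_add]
      push_cast
      linarith [hstep n]
  have hT' : (0 : ℝ) < T := by exact_mod_cast hT
  rw [one_div, inv_mul_le_iff₀ hT', show (T : ℝ) * ((a 0 - lo) / (c * T) + k / c)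
    = (a 0 - lo + T * k) / c by field_simp, le_div_iff₀ hc]
  linarith [htelescope T]

theorem sgd_convergence_rate_general {d : ℕ}
    {Ω : Type*} [mΩ : MeasurableSpace Ω] (μ : Measure Ω) [IsProbabilityMeasure μ]
    (F : EuclideanSpace ℝ (Fin d) → ℝ) (L : ℝ) (hL : 0 < L)
    (hdiff : Differentiable ℝ F)
    (hlip : ∀ x y, ‖gradient F x - gradient F y‖ ≤ L * ‖x - y‖)
    (Fstar : ℝ) (hFstar : ∀ x, Fstar ≤ F x)
    (η : ℝ) (hη : 0 < η) (hηL : η < 2 / L) (σ : ℝ)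
    (θ g : ℕ → Ω → EuclideanSpace ℝ (Fin d))
    (hθmeas : ∀ t, Measurable (θ t))
    (hg_int : ∀ t, Integrable (g t) μ)
    (hF_int : ∀ t, Integrable (fun ω => F (θ t ω)) μ)
    (hgrad_int : ∀ t, Integrable (fun ω => ‖gradient F (θ t ω)‖ ^ 2) μ)
    (hvar_int : ∀ t, Integrable (fun ω => ‖g t ω - gradient F (θ t ω)‖ ^ 2) μ)
    (hstep : ∀ t ω, θ (t + 1) ω = θ t ω - η • g t ω)
    (hunbiased : ∀ t,
      μ[g t | MeasurableSpace.comap (θ t) inferInstance]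
        =ᵐ[μ] fun ω => gradient F (θ t ω))
    (hvar : ∀ t, ∀ᵐ ω ∂μ,
      (μ[(fun ω' => ‖g t ω' - gradient F (θ t ω')‖ ^ 2) |
          MeasurableSpace.comap (θ t) inferInstance]) ω ≤ σ ^ 2)
    (θ₀ : EuclideanSpace ℝ (Fin d)) (hθ₀ : ∀ ω, θ 0 ω = θ₀)
    (T : ℕ) (hT : 0 < T) :
    (1 / (T : ℝ)) * ∑ t ∈ Finset.range T, ∫ ω, ‖gradient F (θ t ω)‖ ^ 2 ∂μ ≤
      2 * (F θ₀ - Fstar) / (η * T * (2 - η * L)) + η * L * σ ^ 2 / (2 - η * L) := by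
  have hgap : 0 < 2 - η * L := by linarith [(lt_div_iff₀ hL).1 hηL]
  have hgrad : Continuous (gradient F) :=
    (LipschitzWith.of_dist_le' fun x y => by simpa only [dist_eq_norm] using hlip x y).continuous
  have hdescent : ∀ t, ∫ ω, F (θ (t + 1) ω) ∂μ ≤ ∫ ω, F (θ t ω) ∂μ
      - η * (2 - η * L) / 2 * ∫ ω, ‖gradient F (θ t ω)‖ ^ 2 ∂μ + η ^ 2 * L * σ ^ 2 / 2 := by
    intro t
    have hu : StronglyMeasurable[MeasurableSpace.comap (θ t) inferInstance]
        fun ω => gradient F (θ t ω) :=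
      hgrad.comp_stronglyMeasurable (Measurable.of_comap_le le_rfl).stronglyMeasurable
    have hu_ae : AEStronglyMeasurable (fun ω => gradient F (θ t ω)) μ :=
      (hu.mono (hθmeas t).comap_le).aestronglyMeasurable
    have hnext := hF_int (t + 1)
    simp only [hstep] at hnext ⊢
    exact integral_sgd_step_le hL.le hdiff hlip (hθmeas t).comap_le hu
      ((memLp_two_iff_integrable_sq_norm hu_ae).2 (hgrad_int t))
      ((memLp_two_iff_integrable_sq_norm ((hg_int t).1.sub hu_ae)).2 (hvar_int t))
      (hF_int t) hnext (hunbiased t) (hvar t)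
  have hstart : ∫ ω, F (θ 0 ω) ∂μ = F θ₀ := by simp [hθ₀]
  have hlo : Fstar ≤ ∫ ω, F (θ T ω) ∂μ := by
    simpa using integral_mono (integrable_const Fstar) (hF_int T) fun ω => hFstar _
  have havg := average_le_of_forall_le_sub_mul_add (a := fun t => ∫ ω, F (θ t ω) ∂μ)
    (b := fun t => ∫ ω, ‖gradient F (θ t ω)‖ ^ 2 ∂μ) (by positivity) hT hdescent hlo
  rw [hstart] at havg
  convert havg using 2 <;> field_simp

/-- SGD convergence rate for an `L`-smooth objective with unbiased stochastic gradients
of conditional variance at most `σ²` and step size `η < 2/L`. -/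
theorem sgd_convergence_rate {d : ℕ}
    {Ω : Type*} [mΩ : MeasurableSpace Ω] (μ : Measure Ω) [IsProbabilityMeasure μ]
    (F : EuclideanSpace ℝ (Fin d) → ℝ) (L : ℝ) (hL : 0 < L)
    (hdiff : Differentiable ℝ F)
    (hlip : ∀ x y, ‖gradient F x - gradient F y‖ ≤ L * ‖x - y‖)
    (Fstar : ℝ) (hFstar : ∀ x, Fstar ≤ F x)
    (η : ℝ) (hη : 0 < η) (hηL : η < 2 / L) (σ : ℝ)
    (θ g : ℕ → Ω → EuclideanSpace ℝ (Fin d))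
    (hθmeas : ∀ t, Measurable (θ t)) (hgmeas : ∀ t, Measurable (g t))
    (hg_int : ∀ t, Integrable (g t) μ)
    (hF_int : ∀ t, Integrable (fun ω => F (θ t ω)) μ)
    (hgrad_int : ∀ t, Integrable (fun ω => ‖gradient F (θ t ω)‖ ^ 2) μ)
    (hvar_int : ∀ t, Integrable (fun ω => ‖g t ω - gradient F (θ t ω)‖ ^ 2) μ)
    (hstep : ∀ t ω, θ (t + 1) ω = θ t ω - η • g t ω)
    (hunbiased : ∀ t,
      μ[g t | MeasurableSpace.comap (θ t) inferInstance]
        =ᵐ[μ] fun ω => gradient F (θ t ω))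
    (hvar : ∀ t, ∀ᵐ ω ∂μ,
      (μ[(fun ω' => ‖g t ω' - gradient F (θ t ω')‖ ^ 2) |
          MeasurableSpace.comap (θ t) inferInstance]) ω ≤ σ ^ 2)
    (θ₀ : EuclideanSpace ℝ (Fin d)) (hθ₀ : ∀ ω, θ 0 ω = θ₀)
    (T : ℕ) (hT : 0 < T) :
    (1 / (T : ℝ)) * ∑ t ∈ Finset.range T, ∫ ω, ‖gradient F (θ t ω)‖ ^ 2 ∂μ ≤
      2 * (F θ₀ - Fstar) / (η * T * (2 - η * L)) + η * L * σ ^ 2 / (2 - η * L) :=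
  sgd_convergence_rate_general (mΩ := mΩ) μ F L hL hdiff hlip Fstar hFstar η hη hηL σ θ g hθmeas
    hg_int hF_int hgrad_int hvar_int hstep hunbiased hvar θ₀ hθ₀ T hT
end
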